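/- arXiv:2007.01859 — 4 statements merged into one kernel-verified Lean document; each statement's English description precedes it below -/
import Mathlib

section
/- Let γ, δ_L, δ_R be angles with 0 < γ, δ_L, δ_R ≥ 0, δ_L, δ_R < π/2, and γ + δ_L + δ_R < π. In the Euclidean plane let A, B_L, B_R be points with |AB_L| = |AB_R| and ∠B_L A B_R = γ, let C be the point inside ∠B_L A B_R such that ∠A B_σ C = π/2 + δ_σ for σ = L, R, and let P be the intersection of the perpendicular bisectors of segments B_L C and B_R C. Then ∠A B_L P = ∠A B_R P = γ/2 + δ_L + δ_R. -/
/-!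
Work with oriented angles, choosing the orientation so that `∡ B_L A B_R = γ` (the other
orientation is the mirror image, with the roles of `L` and `R` exchanged). Because `C` lies inside
the angle at `A`, the oriented angles at `B_L` and `B_R` are `-(π/2 + δ_L)` and `π/2 + δ_R`, and the
angle sum of the quadrilateral `A B_R C B_L` gives `∡ B_R C B_L = -(γ + π + δ_L + δ_R)`. As `P` is
the circumcentre of `B_L B_R C`, the inscribed angle theorem gives `∡ B_L P B_R = 2(γ + δ_L + δ_R)`,
so the base angles at `B_L` of the isosceles triangles `A B_L B_R` and `P B_L B_R` are `(γ - π)/2`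
and `γ + δ_L + δ_R - π/2`; their difference is the claimed angle, and the reflection symmetry of
the two isosceles triangles transfers it to `B_R`.
-/

open EuclideanGeometry Real

namespace Real.Angle

theorem eq_of_coe_eq {a b : ℝ} (h : (a : Angle) = b) (ha : a ∈ Set.Ioc (-π) π)
    (hb : b ∈ Set.Ioc (-π) π) : a = b := by
  rw [← toReal_coe_eq_self_iff.2 ha, h, toReal_coe_eq_self_iff.2 hb]

theorem sign_coe_eq_one_of_mem_Ioo {θ : ℝ} (h : θ ∈ Set.Ioo 0 π) : (θ : Angle).sign = 1 := by
  rwa [← toReal_mem_Ioo_iff_sign_pos, toReal_coe_eq_self_iff.2 ⟨by linarith [h.1, pi_pos], h.2.le⟩]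

theorem toReal_nonneg_of_abs_add_abs_eq {θ ψ : Angle} {γ : ℝ} (hsum : θ + ψ = γ)
    (habs : |θ.toReal| + |ψ.toReal| = γ) (hγ : γ < π) : 0 ≤ θ.toReal ∧ 0 ≤ ψ.toReal := by
  have hγ0 : 0 ≤ γ := habs ▸ add_nonneg (abs_nonneg _) (abs_nonneg _)
  have hbound : |θ.toReal + ψ.toReal| ≤ γ := habs ▸ abs_add_le _ _
  have hreal : θ.toReal + ψ.toReal = γ := by
    refine eq_of_coe_eq (by rw [coe_add, coe_toReal, coe_toReal, hsum]) ?_ ⟨by linarith, hγ.le⟩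
    rw [abs_le] at hbound
    exact ⟨by linarith, by linarith⟩
  constructor <;> linarith [le_abs_self θ.toReal, le_abs_self ψ.toReal, abs_nonneg θ.toReal,
    abs_nonneg ψ.toReal]

theorem eq_coe_half_of_two_zsmul_eq {θ : Angle} {r : ℝ} (h : (2 : ℤ) • θ = r)
    (hθ : |θ.toReal| < π / 2) (hr : |r| < π) : θ = (r / 2 : ℝ) := by
  rw [abs_lt] at hθ hr
  have hreal : 2 * θ.toReal = r := by
    refine eq_of_coe_eq ?_ ⟨by linarith, by linarith⟩ ⟨hr.1, hr.2.le⟩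
    rw [← h, ← coe_toReal θ, ← coe_zsmul, zsmul_eq_mul, Int.cast_two, coe_toReal]
  rw [← coe_toReal θ, ← hreal, mul_div_cancel_left₀ _ two_ne_zero]

end Real.Angle

namespace EuclideanGeometry

variable {V Pt : Type*} [NormedAddCommGroup V] [InnerProductSpace ℝ V] [MetricSpace Pt]
  [NormedAddTorsor V Pt]

theorem angle_lt_pi_div_two_of_dist_eq {p₁ p₂ p₃ : Pt} (h : dist p₁ p₂ = dist p₁ p₃)
    (hne : p₂ ≠ p₃) : ∠ p₁ p₂ p₃ < π / 2 := by
  have hm := sbtw_midpoint_of_ne ℝ hne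
  rw [← hm.angle_eq_right p₁, angle_comm]
  exact angle_lt_pi_div_two_of_angle_eq_pi_div_two
    (angle_left_midpoint_eq_pi_div_two_of_dist_eq h) hm.left_ne

variable [Fact (Module.finrank ℝ V = 2)] [Module.Oriented ℝ V (Fin 2)]

theorem oangle_eq_angle_of_sign_nonneg {p₁ p₂ p₃ : Pt} (h₁ : p₁ ≠ p₂) (h₃ : p₃ ≠ p₂)
    (hs : 0 ≤ (∡ p₁ p₂ p₃).sign) : ∡ p₁ p₂ p₃ = ∠ p₁ p₂ p₃ := by
  rw [angle_eq_abs_oangle_toReal h₁ h₃, Real.Angle.coe_abs_toReal_of_sign_nonneg hs]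

theorem angle_eq_of_oangle_eq {p₁ p₂ p₃ : Pt} {θ : ℝ} (h : ∡ p₁ p₂ p₃ = θ)
    (hθ : θ ∈ Set.Ioo 0 π) : ∠ p₁ p₂ p₃ = θ := by
  have hs : (∡ p₁ p₂ p₃).sign = 1 := h ▸ Real.Angle.sign_coe_eq_one_of_mem_Ioo hθ
  refine Real.Angle.eq_of_coe_eq ((oangle_eq_angle_of_sign_eq_one hs).symm.trans h) ?_
    ⟨by linarith [hθ.1, pi_pos], hθ.2.le⟩
  exact ⟨by linarith [angle_nonneg p₁ p₂ p₃, pi_pos], angle_le_pi p₁ p₂ p₃⟩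

theorem sign_oangle_nonneg_of_angle_add_angle_eq {p p₁ p₂ p₃ : Pt} {γ : ℝ} (h₁ : p₁ ≠ p)
    (h₂ : p₂ ≠ p) (h₃ : p₃ ≠ p) (hadd : ∠ p₁ p p₂ + ∠ p₂ p p₃ = γ) (hγ : ∡ p₁ p p₃ = γ)
    (hγπ : γ < π) : 0 ≤ (∡ p₁ p p₂).sign ∧ 0 ≤ (∡ p₂ p p₃).sign := by
  rw [angle_eq_abs_oangle_toReal h₁ h₂, angle_eq_abs_oangle_toReal h₂ h₃] at hadd
  simpa only [Real.Angle.toReal_nonneg_iff_sign_nonneg] using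
    Real.Angle.toReal_nonneg_of_abs_add_abs_eq ((oangle_add h₁ h₂ h₃).trans hγ) hadd hγπ

theorem oangle_add_oangle_add_oangle_add_oangle_eq_zero {p₁ p₂ p₃ p₄ : Pt} (h₁₂ : p₁ ≠ p₂)
    (h₂₃ : p₂ ≠ p₃) (h₃₄ : p₃ ≠ p₄) (h₄₁ : p₄ ≠ p₁) (h₁₃ : p₁ ≠ p₃) :
    ∡ p₄ p₁ p₂ + ∡ p₁ p₂ p₃ + ∡ p₂ p₃ p₄ + ∡ p₃ p₄ p₁ = 0 := by
  rw [← oangle_add h₄₁ h₁₃.symm h₁₂.symm, ← oangle_add h₂₃ h₁₃ h₃₄.symm]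
  calc _ = (∡ p₁ p₂ p₃ + ∡ p₂ p₃ p₁ + ∡ p₃ p₁ p₂) + (∡ p₃ p₄ p₁ + ∡ p₄ p₁ p₃ + ∡ p₁ p₃ p₄) := by
          abel
    _ = 0 := by
      rw [oangle_add_oangle_add_oangle_eq_pi h₁₂.symm h₂₃.symm h₁₃,
        oangle_add_oangle_add_oangle_eq_pi h₃₄.symm h₄₁.symm h₁₃.symm,
        Real.Angle.coe_pi_add_coe_pi]

theorem oangle_eq_of_dist_eq_of_oangle_eq {p₁ p₂ p₃ : Pt} (h : dist p₁ p₂ = dist p₁ p₃)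
    (hne : p₂ ≠ p₃) {θ : ℝ} (hθ : ∡ p₂ p₁ p₃ = θ) (hθ0 : 0 < θ) (hθ2π : θ < 2 * π) :
    ∡ p₁ p₂ p₃ = ((θ - π) / 2 : ℝ) := by
  refine Real.Angle.eq_coe_half_of_two_zsmul_eq ?_
    (abs_oangle_right_toReal_lt_pi_div_two_of_dist_eq h) (abs_lt.2 ⟨by linarith, by linarith⟩)
  have hapex := oangle_eq_pi_sub_two_zsmul_oangle_of_dist_eq hne h
  rw [oangle_rev, hθ, eq_sub_iff_add_eq, ← eq_sub_iff_add_eq'] at hapex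
  rw [hapex, Real.Angle.coe_sub, sub_neg_eq_add, add_comm, sub_eq_add_neg, Real.Angle.neg_coe_pi]

theorem oangle_eq_oangle_of_dist_eq_of_dist_eq {A P B₁ B₂ : Pt} (hA : dist A B₁ = dist A B₂)
    (hP : dist P B₁ = dist P B₂) (hB : B₁ ≠ B₂) (hAB : A ≠ B₁) (hPB : P ≠ B₁) :
    ∡ A B₂ P = ∡ P B₁ A := by
  have hAB₂ : A ≠ B₂ := fun h ↦ hAB (dist_eq_zero.1 (hA.trans (h ▸ dist_self A)))
  have hPB₂ : P ≠ B₂ := fun h ↦ hPB (dist_eq_zero.1 (hP.trans (h ▸ dist_self P)))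
  rw [← oangle_add hAB₂ hB hPB₂, ← oangle_add hPB hB.symm hAB, oangle_rev B₁ B₂ A,
    ← oangle_eq_oangle_of_dist_eq hA, ← oangle_eq_oangle_of_dist_eq hP, oangle_rev A B₁ B₂]
  abel

theorem oangle_eq_neg_angle_add_angle_add_of_angle_add_angle_eq {A B₁ B₂ C : Pt} {γ : ℝ}
    (hB₁ : B₁ ≠ A) (hB₂ : B₂ ≠ A) (hCA : C ≠ A) (hCB₁ : C ≠ B₁) (hCB₂ : C ≠ B₂)
    (horient : ∡ B₁ A B₂ = γ) (hγπ : γ < π) (hCin : ∠ B₁ A C + ∠ C A B₂ = γ) :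
    ∡ B₂ C B₁ = -↑(γ + ∠ A B₂ C + ∠ A B₁ C) := by
  obtain ⟨hs₁, hs₂⟩ := sign_oangle_nonneg_of_angle_add_angle_eq hB₁ hCA hB₂ hCin horient hγπ
  have h₁ : ∡ C B₁ A = ∠ A B₁ C := by
    rw [oangle_eq_angle_of_sign_nonneg hCB₁ hB₁.symm (by rwa [oangle_rotate_sign,
      oangle_rotate_sign]), angle_comm]
  have h₂ : ∡ A B₂ C = ∠ A B₂ C :=
    oangle_eq_angle_of_sign_nonneg hB₂.symm hCB₂ (by rwa [oangle_rotate_sign])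
  have hquad := oangle_add_oangle_add_oangle_add_oangle_eq_zero hB₂.symm hCB₂.symm hCB₁
    hB₁ hCA.symm
  rw [horient, h₂, h₁] at hquad
  rw [eq_neg_iff_add_eq_zero, ← hquad, Real.Angle.coe_add, Real.Angle.coe_add]
  abel

theorem angle_base_circumcenter_eq_of_oangle_eq (γ δL δR : ℝ) (hγ : 0 < γ) (hδL : 0 ≤ δL)
    (hδR : 0 ≤ δR) (hsum : γ + δL + δR < π) (A BL BR C P : Pt)
    (hAB : dist A BL = dist A BR) (horient : ∡ BL A BR = γ)
    (hCin : ∠ BL A C + ∠ C A BR = γ)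
    (hCL : ∠ A BL C = π / 2 + δL) (hCR : ∠ A BR C = π / 2 + δR)
    (hPL : dist P BL = dist P C) (hPR : dist P BR = dist P C) :
    ∠ A BL P = γ / 2 + δL + δR ∧ ∠ A BR P = γ / 2 + δL + δR := by
  have hπ := pi_pos
  have hs : (∡ BL A BR).sign = 1 :=
    horient ▸ Real.Angle.sign_coe_eq_one_of_mem_Ioo ⟨hγ, by linarith⟩
  have hBLA := left_ne_of_oangle_sign_eq_one hs
  have hBRA := right_ne_of_oangle_sign_eq_one hs
  have hBLBR := left_ne_right_of_oangle_sign_eq_one hs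
  have hCA : C ≠ A := fun h ↦ by rw [h, angle_self_of_ne hBLA.symm] at hCL; linarith
  have hCBL : C ≠ BL := fun h ↦ by
    rw [h] at hCR; linarith [angle_lt_pi_div_two_of_dist_eq hAB.symm hBLBR.symm]
  have hCBR : C ≠ BR := fun h ↦ by
    rw [h] at hCL; linarith [angle_lt_pi_div_two_of_dist_eq hAB hBLBR]
  have hPBL : P ≠ BL := fun h ↦
    hCBL ((dist_eq_zero.1 (hPL.symm.trans (by rw [h, dist_self]))).symm.trans h)
  have hC := oangle_eq_neg_angle_add_angle_add_of_angle_add_angle_eq hBLA hBRA hCA hCBL hCBR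
    horient (by linarith) hCin
  have hP : ∡ BL P BR = ↑(2 * (γ + δL + δR)) := by
    have hcirc : ∡ BL P BR = (2 : ℤ) • ∡ BL C BR :=
      Sphere.oangle_center_eq_two_zsmul_oangle (s := ⟨P, dist P C⟩)
        (mem_sphere.2 ((dist_comm BL P).trans hPL)) (mem_sphere.2 (dist_comm C P))
        (mem_sphere.2 ((dist_comm BR P).trans hPR)) hCBL hCBR
    rw [hcirc, oangle_rev, hC, neg_neg, hCL, hCR, ← Real.Angle.coe_zsmul,
      Real.Angle.angle_eq_iff_two_pi_dvd_sub]
    exact ⟨1, by push_cast; ring⟩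
  have hPBLBR : ∡ P BL BR = ↑((2 * (γ + δL + δR) - π) / 2) :=
    oangle_eq_of_dist_eq_of_oangle_eq (hPL.trans hPR.symm) hBLBR hP (by linarith) (by linarith)
  have hABLBR : ∡ A BL BR = ↑((γ - π) / 2) :=
    oangle_eq_of_dist_eq_of_oangle_eq hAB hBLBR horient hγ (by linarith)
  have hPBLA : ∡ P BL A = ↑(γ / 2 + δL + δR) := by
    rw [← oangle_add hPBL hBLBR.symm hBLA.symm, oangle_rev A BL BR, hPBLBR, hABLBR,
      ← Real.Angle.coe_neg, ← Real.Angle.coe_add]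
    congr 1
    ring
  have hrange : γ / 2 + δL + δR ∈ Set.Ioo 0 π := ⟨by linarith, by linarith⟩
  refine ⟨angle_comm P BL A ▸ angle_eq_of_oangle_eq hPBLA hrange, angle_eq_of_oangle_eq ?_ hrange⟩
  rw [oangle_eq_oangle_of_dist_eq_of_dist_eq hAB (hPL.trans hPR.symm) hBLBR hBLA.symm hPBL, hPBLA]

end EuclideanGeometry

theorem stmt_3_general (γ δL δR : ℝ) (hγ : 0 < γ) (hδL : 0 ≤ δL) (hδR : 0 ≤ δR)
    (hsum : γ + δL + δR < Real.pi)
    (A BL BR C P : EuclideanSpace ℝ (Fin 2))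
    (hAB : dist A BL = dist A BR)
    (hangle : ∠ BL A BR = γ)
    (hCin : ∠ BL A C + ∠ C A BR = γ)
    (hCL : ∠ A BL C = Real.pi / 2 + δL)
    (hCR : ∠ A BR C = Real.pi / 2 + δR)
    (hPL : dist P BL = dist P C)
    (hPR : dist P BR = dist P C) :
    ∠ A BL P = γ / 2 + δL + δR ∧ ∠ A BR P = γ / 2 + δL + δR := by
  have hBLA : BL ≠ A := by
    rintro rfl
    obtain rfl : BR = BL := (dist_eq_zero.1 (hAB.symm.trans (dist_self _))).symm
    rw [angle_self_left, angle_self_right] at hCin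
    linarith
  have hBRA : BR ≠ A := fun h ↦ hBLA (dist_eq_zero.1 (hAB.trans (h ▸ dist_self A))).symm
  have : Fact (Module.finrank ℝ (EuclideanSpace ℝ (Fin 2)) = 2) := ⟨finrank_euclideanSpace_fin⟩
  let _ : Module.Oriented ℝ (EuclideanSpace ℝ (Fin 2)) (Fin 2) :=
    ⟨(EuclideanSpace.basisFun (Fin 2) ℝ).toBasis.orientation⟩
  rcases oangle_eq_angle_or_eq_neg_angle hBLA hBRA with h | h
  · exact angle_base_circumcenter_eq_of_oangle_eq γ δL δR hγ hδL hδR hsum A BL BR C P hAB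
      (hangle ▸ h) hCin hCL hCR hPL hPR
  · obtain ⟨hR, hL⟩ := angle_base_circumcenter_eq_of_oangle_eq γ δR δL hγ hδR hδL
      (by linarith) A BR BL C P hAB.symm (by rw [oangle_rev, h, hangle, neg_neg])
      (by rw [angle_comm, add_comm, angle_comm C]; exact hCin) hCR hCL hPR hPL
    exact ⟨by linarith, by linarith⟩

theorem stmt_3 (γ δL δR : ℝ) (hγ : 0 < γ) (hδL : 0 ≤ δL) (hδR : 0 ≤ δR)
    (hδL' : δL < Real.pi / 2) (hδR' : δR < Real.pi / 2)
    (hsum : γ + δL + δR < Real.pi)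
    (A BL BR C P : EuclideanSpace ℝ (Fin 2))
    (hAB : dist A BL = dist A BR)
    (hangle : ∠ BL A BR = γ)
    (hCin : ∠ BL A C + ∠ C A BR = γ)
    (hCL : ∠ A BL C = Real.pi / 2 + δL)
    (hCR : ∠ A BR C = Real.pi / 2 + δR)
    (hPL : dist P BL = dist P C)
    (hPR : dist P BR = dist P C) :
    ∠ A BL P = γ / 2 + δL + δR ∧ ∠ A BR P = γ / 2 + δL + δR :=
  stmt_3_general γ δL δR hγ hδL hδR hsum A BL BR C P hAB hangle hCin hCL hCR hPL hPR
end

section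
/- For any real r > 1 and any angle ψ with the relevant quantities defined, setting ρ = arctan( sin ψ / (r − cos ψ) ), one has tan(ψ/2 + ρ) = ((r+1)/(r−1))·tan(ψ/2). -/
/-! With `t = tan (ψ / 2)`, the half-angle substitution turns `tan ρ = sin ψ / (r - cos ψ)` into
`tan ρ = 2 t / E` with `E = (r - 1) + (r + 1) t²`. In the addition formula for `tan (ψ / 2 + ρ)`
the numerator `t + tan ρ` becomes `(r + 1)(1 + t²) t / E` and the denominator `1 - t tan ρ`
becomes `(r - 1)(1 + t²) / E`, so everything but `(r + 1) / (r - 1) · t` cancels. -/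

open Real

lemma Real.tan_add_of_cos_ne_zero {x y : ℝ} (hx : cos x ≠ 0) (hy : cos y ≠ 0) :
    tan (x + y) = (tan x + tan y) / (1 - tan x * tan y) :=
  tan_add' ⟨fun k h ↦ hx (cos_eq_zero_iff.2 ⟨k, h⟩),
    fun l h ↦ hy (cos_eq_zero_iff.2 ⟨l, h⟩)⟩

lemma Real.sin_div_sub_cos_eq_of_tan_half (r ψ : ℝ) (h : cos (ψ / 2) ≠ 0) :
    sin ψ / (r - cos ψ) = 2 * tan (ψ / 2) / (r - 1 + (r + 1) * tan (ψ / 2) ^ 2) := by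
  have hcos : cos ψ ≠ -1 := by
    have hdouble : cos ψ = 2 * cos (ψ / 2) ^ 2 - 1 := by
      rw [← cos_two_mul, mul_div_cancel₀ ψ two_ne_zero]
    intro h'
    exact h (pow_eq_zero_iff two_ne_zero |>.1 (by linarith))
  have ht : 1 + tan (ψ / 2) ^ 2 ≠ 0 := by positivity
  have hsub : r - (1 - tan (ψ / 2) ^ 2) / (1 + tan (ψ / 2) ^ 2)
      = (r - 1 + (r + 1) * tan (ψ / 2) ^ 2) / (1 + tan (ψ / 2) ^ 2) := by
    field_simp
    ring
  rw [sin_eq_two_mul_tan_half_div_one_add_tan_half_sq,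
    cos_eq_two_mul_tan_half_div_one_sub_tan_half_sq ψ hcos, hsub, div_div_div_cancel_right₀ ht]

lemma Real.tan_add_arctan_two_mul_tan_div {r x : ℝ} (hr : 1 < r) (hx : cos x ≠ 0) :
    tan (x + arctan (2 * tan x / (r - 1 + (r + 1) * tan x ^ 2))) = (r + 1) / (r - 1) * tan x := by
  set t := tan x
  have hE : r - 1 + (r + 1) * t ^ 2 ≠ 0 := by nlinarith [sq_nonneg t]
  have hnum : t + 2 * t / (r - 1 + (r + 1) * t ^ 2)
      = (r + 1) * (1 + t ^ 2) * t / (r - 1 + (r + 1) * t ^ 2) := by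
    rw [eq_div_iff hE, add_mul, div_mul_cancel₀ _ hE]
    ring
  have hden : 1 - t * (2 * t / (r - 1 + (r + 1) * t ^ 2))
      = (r - 1) * (1 + t ^ 2) / (r - 1 + (r + 1) * t ^ 2) := by
    rw [eq_div_iff hE, sub_mul, mul_div_assoc', div_mul_cancel₀ _ hE]
    ring
  have h1 : r - 1 ≠ 0 := by linarith
  have h2 : 1 + t ^ 2 ≠ 0 := by positivity
  rw [tan_add_of_cos_ne_zero hx (cos_arctan_pos _).ne', tan_arctan, hnum, hden,
    div_div_div_cancel_right₀ hE]
  field_simp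

theorem stmt_6 (r ψ : ℝ) (hr : 1 < r) (hψ : |ψ| < Real.pi)
    (ρ : ℝ) (hρ : ρ = Real.arctan (Real.sin ψ / (r - Real.cos ψ))) :
    Real.tan (ψ / 2 + ρ) = ((r + 1) / (r - 1)) * Real.tan (ψ / 2) := by
  obtain ⟨hlo, hhi⟩ := abs_lt.mp hψ
  have hc : cos (ψ / 2) ≠ 0 := (cos_pos_of_mem_Ioo ⟨by linarith, by linarith⟩).ne'
  rw [hρ, sin_div_sub_cos_eq_of_tan_half r ψ hc]
  exact tan_add_arctan_two_mul_tan_div hr hc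
end

section
/- Let β_σ ∈ (0, π), γ ∈ (0, π) with β_σ + γ/2 < π for σ = L, R, and suppose β_L + β_R + γ/2 > π. Set c = tan(γ/2) and tan ζ_σ = 1/(2/c + 1/tan β_σ) (with ζ_σ = γ/2 if β_σ + γ/2 ≥ π). Then ζ_L + ζ_R > γ/2. -/
/-!
Write `t = γ / 2`. Then `2 / c + 1 / tan β = cot t + (cot t + cot β)`, and for positive `u, v` the
arccotangents satisfy `t < arccot u + arccot v` as soon as `(u - cot t) (v - cot t) < 1 + cot² t`
(the cotangent addition formula). Since `cot t + cot β = sin (β + t) / (sin t sin β)` and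
`1 + cot² t = 1 / sin² t`, this reduces to `sin (βL + t) sin (βR + t) < sin βL sin βR`, which follows
from `sin a sin b - sin (a + t) sin (b + t) = - sin t sin (a + b + t)` and `π < βL + βR + t < 2π`.
-/

open Real

namespace Real

theorem cot_add_cot {a b : ℝ} (ha : sin a ≠ 0) (hb : sin b ≠ 0) :
    cot a + cot b = sin (a + b) / (sin a * sin b) := by
  rw [cot_eq_cos_div_sin, cot_eq_cos_div_sin, sin_add]
  field_simp
  ring

theorem cot_pos_of_pos_of_lt_pi_div_two {x : ℝ} (hx : 0 < x) (hx' : x < π / 2) : 0 < cot x := by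
  rw [cot_eq_cos_div_sin]
  exact div_pos (cos_pos_of_mem_Ioo ⟨by linarith, hx'⟩) (sin_pos_of_pos_of_lt_pi hx (by linarith))

theorem cot_add_cot_pos {a b : ℝ} (ha : 0 < a) (hb : 0 < b) (hab : a + b < π) :
    0 < cot a + cot b := by
  have hsa := sin_pos_of_pos_of_lt_pi ha (by linarith)
  have hsb := sin_pos_of_pos_of_lt_pi hb (by linarith)
  rw [cot_add_cot hsa.ne' hsb.ne']
  exact div_pos (sin_pos_of_pos_of_lt_pi (add_pos ha hb) hab) (mul_pos hsa hsb)

theorem sin_add_mul_sin_add_lt_sin_mul_sin {a b t : ℝ} (ht : 0 < t) (ht' : t < π)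
    (h₁ : π < a + b + t) (h₂ : a + b + t < 2 * π) :
    sin (a + t) * sin (b + t) < sin a * sin b := by
  have hdiff : sin a * sin b - sin (a + t) * sin (b + t) = -(sin t * sin (a + b + t)) := by
    simp only [sin_add, cos_add]
    linear_combination (-(sin a * sin b)) * sin_sq_add_cos_sq t
  have hneg : sin (a + b + t) < 0 := by
    rw [← sin_sub_two_pi]
    exact sin_neg_of_neg_of_neg_pi_lt (by linarith) (by linarith)
  nlinarith [sin_pos_of_pos_of_lt_pi ht ht']

theorem cot_add_cot_mul_cot_add_cot_lt {a b t : ℝ} (ha : 0 < a) (ha' : a < π) (hb : 0 < b)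
    (hb' : b < π) (ht : 0 < t) (ht' : t < π) (h₁ : π < a + b + t) (h₂ : a + b + t < 2 * π) :
    (cot t + cot a) * (cot t + cot b) < 1 + cot t ^ 2 := by
  have hsa := sin_pos_of_pos_of_lt_pi ha ha'
  have hsb := sin_pos_of_pos_of_lt_pi hb hb'
  have hst := sin_pos_of_pos_of_lt_pi ht ht'
  calc (cot t + cot a) * (cot t + cot b)
      = sin (a + t) * sin (b + t) / (sin t ^ 2 * (sin a * sin b)) := by
        rw [cot_add_cot hst.ne' hsa.ne', cot_add_cot hst.ne' hsb.ne', add_comm t a, add_comm t b]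
        field_simp
    _ < sin a * sin b / (sin t ^ 2 * (sin a * sin b)) :=
        div_lt_div_of_pos_right (sin_add_mul_sin_add_lt_sin_mul_sin ht ht' h₁ h₂) (by positivity)
    _ = 1 + cot t ^ 2 := by
        rw [cot_eq_cos_div_sin]
        field_simp
        linear_combination -sin_sq_add_cos_sq t

theorem lt_arctan_add_arctan {x y t : ℝ} (hx : 0 < x) (hy : 0 < y) (ht : t < π)
    (h : (1 - x * y) * sin t < (x + y) * cos t) : t < arctan x + arctan y := by
  have hsin : sin (arctan x + arctan y - t) * (√(1 + x ^ 2) * √(1 + y ^ 2)) =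
      (x + y) * cos t - (1 - x * y) * sin t := by
    rw [sin_sub, sin_add, cos_add, sin_arctan, cos_arctan, sin_arctan, cos_arctan]
    field_simp
  have hpos : 0 < sin (arctan x + arctan y - t) :=
    pos_of_mul_pos_left (hsin ▸ sub_pos.2 h) (by positivity)
  by_contra! hle
  have := arctan_pos.2 hx
  have := arctan_pos.2 hy
  exact hpos.not_ge (sin_nonpos_of_nonpos_of_neg_pi_le (by linarith) (by linarith))

theorem lt_arctan_one_div_add_arctan_one_div {u v t : ℝ} (hu : 0 < u) (hv : 0 < v) (ht : 0 < t)
    (ht' : t < π) (h : (u - cot t) * (v - cot t) < 1 + cot t ^ 2) :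
    t < arctan (1 / u) + arctan (1 / v) := by
  have hs := sin_pos_of_pos_of_lt_pi ht ht'
  refine lt_arctan_add_arctan (by positivity) (by positivity) ht' ?_
  rw [cot_eq_cos_div_sin] at h
  field_simp at h ⊢
  nlinarith [sin_sq_add_cos_sq t]

end Real

theorem stmt_11 (βL βR γ : ℝ)
    (hβL : 0 < βL) (hβL' : βL < Real.pi) (hβR : 0 < βR) (hβR' : βR < Real.pi)
    (hγ0 : 0 < γ) (hγπ : γ < Real.pi)
    (hLγ : βL + γ / 2 < Real.pi) (hRγ : βR + γ / 2 < Real.pi)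
    (hsum : βL + βR + γ / 2 > Real.pi)
    (c : ℝ) (hc : c = Real.tan (γ / 2)) :
    Real.arctan (1 / (2 / c + 1 / Real.tan βL)) +
      Real.arctan (1 / (2 / c + 1 / Real.tan βR)) > γ / 2 := by
  set t := γ / 2 with ht_def
  have ht : 0 < t := by positivity
  have hcot : ∀ β, 2 / c + 1 / tan β = cot t + (cot t + cot β) := fun β ↦ by
    rw [hc, ← inv_eq_one_div, tan_inv_eq_cot, div_eq_mul_inv, tan_inv_eq_cot]
    ring
  have hcot_t : 0 < cot t := cot_pos_of_pos_of_lt_pi_div_two ht (by linarith)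
  rw [hcot, hcot]
  refine lt_arctan_one_div_add_arctan_one_div
    (add_pos hcot_t (cot_add_cot_pos ht hβL (by linarith)))
    (add_pos hcot_t (cot_add_cot_pos ht hβR (by linarith))) ht (by linarith) ?_
  simpa only [add_sub_cancel_left] using
    cot_add_cot_mul_cot_add_cot_lt hβL hβL' hβR hβR' ht (by linarith) hsum (by linarith)
end

section
/- Let β ∈ (0, π) and γ ∈ (0, π) with β + γ/2 < π, c = tan(γ/2), and let ζ = arctan(1/(2/c + 1/tan β)). Then β + γ/4 ≤ π/2 if and only if ζ ≤ γ/4, and β + γ/4 ≥ π/2 if and only if ζ ≥ γ/4. -/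
/-!
With `t = γ/4` and `u = tan t`, the double-angle formula `2 cot (2t) = 1/u - u` gives
`ζ = arctan (1/D)` with `D = 1/u - u + cot β`; here `D > 0` since
`sin (γ/2) sin β · D = cos (γ/2) sin β + sin (β + γ/2)`. As `u D = 1 + u (cot β - u)`,
comparing `ζ` with `t = arctan u` amounts to comparing `tan t` with `cot β`, that is, to the
sign of `cos (β + t)` for `0 < β + t < π`.
-/

open Real Set

namespace Real

lemma two_mul_cot_two_mul (x : ℝ) : 2 * cot (2 * x) = (tan x)⁻¹ - tan x := by
  rw [← tan_inv_eq_cot, tan_two_mul]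
  rcases eq_or_ne (tan x) 0 with h | h
  · simp [h]
  · rw [inv_div, ← mul_div_assoc, mul_div_mul_left _ _ two_ne_zero, sub_div, one_div, sq,
      mul_div_cancel_right₀ _ h]

lemma cos_nonneg_iff_le_pi_div_two {x : ℝ} (hx : x ∈ Icc 0 π) :
    0 ≤ cos x ↔ x ≤ π / 2 := by
  rw [← cos_pi_div_two, strictAntiOn_cos.le_iff_ge ⟨by positivity, by linarith [pi_pos]⟩ hx]

lemma cos_nonpos_iff_pi_div_two_le {x : ℝ} (hx : x ∈ Icc 0 π) :
    cos x ≤ 0 ↔ π / 2 ≤ x := by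
  rw [← cos_pi_div_two, strictAntiOn_cos.le_iff_ge hx ⟨by positivity, by linarith [pi_pos]⟩]

section TanCot

variable {t β : ℝ}

lemma tan_le_cot_iff_cos_add_nonneg (ht : 0 < cos t) (hβ : 0 < sin β) :
    tan t ≤ cot β ↔ 0 ≤ cos (β + t) := by
  rw [tan_eq_sin_div_cos, cot_eq_cos_div_sin, div_le_div_iff₀ ht hβ, cos_add, sub_nonneg,
    mul_comm (sin t)]

lemma cot_le_tan_iff_cos_add_nonpos (ht : 0 < cos t) (hβ : 0 < sin β) :
    cot β ≤ tan t ↔ cos (β + t) ≤ 0 := by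
  rw [tan_eq_sin_div_cos, cot_eq_cos_div_sin, div_le_div_iff₀ hβ ht, cos_add, sub_nonpos,
    mul_comm (sin t)]

lemma tan_le_cot_iff_add_le_pi_div_two (ht0 : 0 < t) (ht : t < π / 2) (hβ0 : 0 < β)
    (htβ : β + t < π) :
    tan t ≤ cot β ↔ β + t ≤ π / 2 := by
  rw [tan_le_cot_iff_cos_add_nonneg (cos_pos_of_mem_Ioo ⟨by linarith, ht⟩)
    (sin_pos_of_pos_of_lt_pi hβ0 (by linarith)),
    cos_nonneg_iff_le_pi_div_two ⟨by linarith, htβ.le⟩]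

lemma cot_le_tan_iff_pi_div_two_le_add (ht0 : 0 < t) (ht : t < π / 2) (hβ0 : 0 < β)
    (htβ : β + t < π) :
    cot β ≤ tan t ↔ π / 2 ≤ β + t := by
  rw [cot_le_tan_iff_cos_add_nonpos (cos_pos_of_mem_Ioo ⟨by linarith, ht⟩)
    (sin_pos_of_pos_of_lt_pi hβ0 (by linarith)),
    cos_nonpos_iff_pi_div_two_le ⟨by linarith, htβ.le⟩]

lemma two_mul_cot_add_cot_pos (ht0 : 0 < t) (ht : t < π / 2) (hβ0 : 0 < β)
    (htβ : β + t < π) :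
    0 < 2 * cot t + cot β := by
  have hsint : 0 < sin t := sin_pos_of_pos_of_lt_pi ht0 (by linarith)
  have hsinβ : 0 < sin β := sin_pos_of_pos_of_lt_pi hβ0 (by linarith)
  have hcost : 0 < cos t := cos_pos_of_mem_Ioo ⟨by linarith, ht⟩
  have hsum : 0 < sin (β + t) := sin_pos_of_pos_of_lt_pi (by linarith) htβ
  have key : (2 * cot t + cot β) * (sin t * sin β) = cos t * sin β + sin (β + t) := by
    rw [cot_eq_cos_div_sin, cot_eq_cos_div_sin, sin_add]
    field_simp
    ring
  have hprod : 0 < (2 * cot t + cot β) * (sin t * sin β) := key ▸ by positivity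
  exact pos_of_mul_pos_left hprod (by positivity)

end TanCot

end Real

section InvSubAdd

variable {u w : ℝ}

lemma mul_inv_sub_add_eq (hu : u ≠ 0) : u * (u⁻¹ - u + w) = 1 + u * (w - u) := by
  field_simp
  ring

lemma inv_inv_sub_add_le_iff (hu : 0 < u) (hD : 0 < u⁻¹ - u + w) :
    (u⁻¹ - u + w)⁻¹ ≤ u ↔ u ≤ w := by
  rw [inv_le_iff_one_le_mul₀ hD, mul_inv_sub_add_eq hu.ne', le_add_iff_nonneg_right,
    mul_nonneg_iff_of_pos_left hu, sub_nonneg]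

lemma le_inv_inv_sub_add_iff (hu : 0 < u) (hD : 0 < u⁻¹ - u + w) :
    u ≤ (u⁻¹ - u + w)⁻¹ ↔ w ≤ u := by
  rw [← one_div, le_div_iff₀ hD, mul_inv_sub_add_eq hu.ne', add_le_iff_nonpos_right,
    ← neg_nonneg, ← mul_neg, mul_nonneg_iff_of_pos_left hu, neg_nonneg, sub_nonpos]

end InvSubAdd

theorem stmt_12_general (β γ : ℝ) (hβ0 : 0 < β)
    (hγ0 : 0 < γ) (hγπ : γ < Real.pi) (hβγ : β + γ / 2 < Real.pi)
    (c ζ : ℝ) (hc : c = Real.tan (γ / 2))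
    (hζ : ζ = Real.arctan (1 / (2 / c + 1 / Real.tan β))) :
    (β + γ / 4 ≤ Real.pi / 2 ↔ ζ ≤ γ / 4) ∧
    (β + γ / 4 ≥ Real.pi / 2 ↔ ζ ≥ γ / 4) := by
  set t := γ / 4 with ht_def
  have hpos : 0 < 2 * cot (γ / 2) + cot β :=
    two_mul_cot_add_cot_pos (by positivity) (by linarith) hβ0 hβγ
  rw [show γ / 2 = 2 * t by ring, two_mul_cot_two_mul] at hpos
  have hζ' : ζ = arctan ((tan t)⁻¹ - tan t + cot β)⁻¹ := by
    rw [hζ, hc, one_div, one_div, tan_inv_eq_cot, div_eq_mul_inv, tan_inv_eq_cot,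
      show γ / 2 = 2 * t by ring, two_mul_cot_two_mul]
  have ht0 : 0 < t := by positivity
  have ht : t < π / 2 := by linarith
  have hu : 0 < tan t := tan_pos_of_pos_of_lt_pi_div_two ht0 ht
  have htarc : arctan (tan t) = t := arctan_tan (by linarith) ht
  constructor
  · rw [← tan_le_cot_iff_add_le_pi_div_two ht0 ht hβ0 (by linarith),
      ← inv_inv_sub_add_le_iff hu hpos, ← arctan_strictMono.le_iff_le, htarc, hζ']
  · rw [ge_iff_le, ge_iff_le, ← cot_le_tan_iff_pi_div_two_le_add ht0 ht hβ0 (by linarith),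
      ← le_inv_inv_sub_add_iff hu hpos, ← arctan_strictMono.le_iff_le, htarc, hζ']

theorem stmt_12 (β γ : ℝ) (hβ0 : 0 < β) (hβπ : β < Real.pi)
    (hγ0 : 0 < γ) (hγπ : γ < Real.pi) (hβγ : β + γ / 2 < Real.pi)
    (c ζ : ℝ) (hc : c = Real.tan (γ / 2))
    (hζ : ζ = Real.arctan (1 / (2 / c + 1 / Real.tan β))) :
    (β + γ / 4 ≤ Real.pi / 2 ↔ ζ ≤ γ / 4) ∧
    (β + γ / 4 ≥ Real.pi / 2 ↔ ζ ≥ γ / 4) :=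
  stmt_12_general β γ hβ0 hγ0 hγπ hβγ c ζ hc hζ
end
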